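/- arXiv:1910.04947 — 2 statements merged into one kernel-verified Lean document; each statement's English description precedes it below -/
import Mathlib

section
/- For every positive integer n and every divisor t of n, Σ_{divisors m of n with t | m} ξ_n(m) · φ(gcd(t, m/t)) / gcd(t, m/t) = 1 if t = n and 0 otherwise, where ξ_n(m) := (λ(n/m)/(n/m)) · (φ(gcd(m, n/m))/gcd(m, n/m)). -/
/-!
Write `n = t * e` and `m = t * d`. The sum becomes `∑_{d ∣ e} ξ_{te}(td) φ(g)/g` with
`g = gcd(t, d)`, and for fixed `t` this is a multiplicative function of `e`: every gcd in the
summand splits along a coprime factorisation of `e`, and so do `λ` and `φ(g)/g`. It is therefore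
enough to treat `e = p ^ K`, where the summand depends on `t` only through whether `p ∣ t`, and
the sum over `d = p ^ i` collapses to a telescoping sum of the `(p - 1) / p ^ j`.
-/

/-- `λ(k) = ∏_{p | k, p prime} (−p)` as a rational number. -/
noncomputable def lambdaFun (k : ℕ) : ℚ := ∏ p ∈ k.primeFactors, (-(p : ℚ))

/-- `ξ_n(m) = (λ(n/m)/(n/m)) · (φ(gcd(m, n/m))/gcd(m, n/m))`. -/
noncomputable def xiFun (n m : ℕ) : ℚ :=
  (lambdaFun (n / m) / ((n / m : ℕ) : ℚ)) *
    ((Nat.totient (Nat.gcd m (n / m)) : ℚ) / (Nat.gcd m (n / m) : ℚ))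

open Finset ArithmeticFunction

theorem Nat.Coprime.sum_divisors_mul_eq_sum_sum {M : Type*} [AddCommMonoid M] (f : ℕ → M)
    {m n : ℕ} (hmn : m.Coprime n) :
    ∑ d ∈ (m * n).divisors, f d = ∑ x ∈ m.divisors, ∑ y ∈ n.divisors, f (x * y) := by
  rw [Nat.divisors_mul, Finset.mul_def, sum_image hmn.mul_injOn_divisors, sum_product]

theorem Nat.sum_divisors_filter_dvd {M : Type*} [AddCommMonoid M] (f : ℕ → M) {n t : ℕ}
    (ht : t ∣ n) :
    ∑ m ∈ n.divisors.filter (t ∣ ·), f m = ∑ d ∈ (n / t).divisors, f (t * d) := by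
  obtain ⟨e, rfl⟩ := ht
  rcases Nat.eq_zero_or_pos t with rfl | ht₀
  · simp
  rw [Nat.mul_div_cancel_left e ht₀]
  refine (sum_nbij' (t * ·) (· / t) ?_ ?_ ?_ ?_ fun _ _ => rfl).symm
  · simp +contextual [mul_dvd_mul_left, ht₀.ne']
  · simp only [mem_filter, Nat.mem_divisors]
    rintro _ ⟨⟨hm, he⟩, d, rfl⟩
    simp_all [Nat.mul_dvd_mul_iff_left ht₀]
  · exact fun d _ => Nat.mul_div_cancel_left d ht₀
  · exact fun m hm => Nat.mul_div_cancel' (mem_filter.mp hm).2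

theorem lambdaFun_mul {a b : ℕ} (ha : a ≠ 0) (hb : b ≠ 0) (h : a.Coprime b) :
    lambdaFun (a * b) = lambdaFun a * lambdaFun b := by
  rw [lambdaFun, Nat.primeFactors_mul ha hb, prod_union h.disjoint_primeFactors]; rfl

theorem lambdaFun_prime_pow {p : ℕ} (hp : p.Prime) (j : ℕ) :
    lambdaFun (p ^ j) = if j = 0 then 1 else -(p : ℚ) := by
  rcases eq_or_ne j 0 with rfl | hj
  · simp [lambdaFun]
  · simp [lambdaFun, Nat.primeFactors_prime_pow hj hp, hj]

noncomputable def totientRatio (g : ℕ) : ℚ := (g.totient : ℚ) / g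

theorem totientRatio_mul {a b : ℕ} (h : a.Coprime b) :
    totientRatio (a * b) = totientRatio a * totientRatio b := by
  rw [totientRatio, Nat.totient_mul h]
  push_cast
  exact mul_div_mul_comm _ _ _ _

theorem totientRatio_prime_pow {p k : ℕ} (hp : p.Prime) (hk : k ≠ 0) :
    totientRatio (p ^ k) = 1 - (p : ℚ)⁻¹ := by
  have : ((p ^ k : ℕ) : ℚ) ≠ 0 := by exact_mod_cast (pow_pos hp.pos k).ne'
  rw [totientRatio, Nat.totient_eq_mul_prod_factors, Nat.primeFactors_prime_pow hk hp,
    prod_singleton, mul_div_cancel_left₀ _ this]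

theorem totientRatio_gcd_prime_pow {p : ℕ} (hp : p.Prime) (a j : ℕ) :
    totientRatio (a.gcd (p ^ j)) = if j ≠ 0 ∧ p ∣ a then 1 - (p : ℚ)⁻¹ else 1 := by
  split_ifs with h
  · obtain ⟨k, -, hk⟩ := (Nat.dvd_prime_pow hp).mp (Nat.gcd_dvd_right a (p ^ j))
    have hpk : p ∣ p ^ k := hk ▸ Nat.dvd_gcd h.2 (dvd_pow_self p h.1)
    rw [hk, totientRatio_prime_pow hp]
    rintro rfl
    exact hp.one_lt.ne' (Nat.dvd_one.mp (by simpa using hpk))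
  · have : a.Coprime (p ^ j) := by
      rcases not_and_or.mp h with hj | hpa
      · simp [not_not.mp hj]
      · exact ((Nat.Prime.coprime_iff_not_dvd hp).mpr hpa).symm.pow_right j
    simp [this, totientRatio]

noncomputable def xiSummand (t e d : ℕ) : ℚ :=
  lambdaFun (e / d) / ((e / d : ℕ) : ℚ) * totientRatio ((t * d).gcd (e / d)) *
    totientRatio (t.gcd d)

theorem xiSummand_mul (t : ℕ) {e₁ e₂ d₁ d₂ : ℕ} (he₁ : e₁ ≠ 0) (he₂ : e₂ ≠ 0)
    (he : e₁.Coprime e₂) (hd₁ : d₁ ∣ e₁) (hd₂ : d₂ ∣ e₂) :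
    xiSummand t (e₁ * e₂) (d₁ * d₂) = xiSummand t e₁ d₁ * xiSummand t e₂ d₂ := by
  have hq₁ : e₁ / d₁ ≠ 0 :=
    (Nat.div_ne_zero_iff_of_dvd hd₁).mpr ⟨he₁, ne_zero_of_dvd_ne_zero he₁ hd₁⟩
  have hq₂ : e₂ / d₂ ≠ 0 :=
    (Nat.div_ne_zero_iff_of_dvd hd₂).mpr ⟨he₂, ne_zero_of_dvd_ne_zero he₂ hd₂⟩
  have hq : (e₁ / d₁).Coprime (e₂ / d₂) :=
    (he.coprime_dvd_left (Nat.div_dvd_of_dvd hd₁)).coprime_dvd_right (Nat.div_dvd_of_dvd hd₂)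
  have hd : d₁.Coprime d₂ := (he.coprime_dvd_left hd₁).coprime_dvd_right hd₂
  have hgcd : (t * (d₁ * d₂)).gcd (e₁ / d₁ * (e₂ / d₂)) =
      (t * d₁).gcd (e₁ / d₁) * (t * d₂).gcd (e₂ / d₂) := by
    have h₁ : d₂.Coprime (e₁ / d₁) :=
      (he.symm.coprime_dvd_left hd₂).coprime_dvd_right (Nat.div_dvd_of_dvd hd₁)
    have h₂ : d₁.Coprime (e₂ / d₂) :=
      (he.coprime_dvd_left hd₁).coprime_dvd_right (Nat.div_dvd_of_dvd hd₂)
    rw [Nat.Coprime.gcd_mul _ hq, ← mul_assoc, h₁.gcd_mul_right_cancel, mul_right_comm,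
      h₂.gcd_mul_right_cancel]
  have hg : ((t * d₁).gcd (e₁ / d₁)).Coprime ((t * d₂).gcd (e₂ / d₂)) :=
    (hq.coprime_dvd_left (Nat.gcd_dvd_right _ _)).coprime_dvd_right (Nat.gcd_dvd_right _ _)
  have hg' : (t.gcd d₁).Coprime (t.gcd d₂) :=
    (hd.coprime_dvd_left (Nat.gcd_dvd_right _ _)).coprime_dvd_right (Nat.gcd_dvd_right _ _)
  rw [xiSummand, ← Nat.div_mul_div_comm hd₁ hd₂, hgcd, Nat.Coprime.gcd_mul _ hd,
    lambdaFun_mul hq₁ hq₂ hq, totientRatio_mul hg, totientRatio_mul hg', xiSummand, xiSummand]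
  push_cast
  ring

noncomputable def xiSum (t : ℕ) : ArithmeticFunction ℚ :=
  ⟨fun e => ∑ d ∈ e.divisors, xiSummand t e d, by simp⟩

theorem xiSum_apply (t e : ℕ) : xiSum t e = ∑ d ∈ e.divisors, xiSummand t e d := rfl

theorem isMultiplicative_xiSum (t : ℕ) : (xiSum t).IsMultiplicative := by
  refine IsMultiplicative.iff_ne_zero.mpr
    ⟨by simp [xiSum_apply, xiSummand, lambdaFun, totientRatio], fun he₁ he₂ he => ?_⟩
  rw [xiSum_apply, he.sum_divisors_mul_eq_sum_sum, xiSum_apply, xiSum_apply, sum_mul_sum]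
  refine sum_congr rfl fun d₁ hd₁ => sum_congr rfl fun d₂ hd₂ => ?_
  exact xiSummand_mul t he₁ he₂ he (Nat.dvd_of_mem_divisors hd₁) (Nat.dvd_of_mem_divisors hd₂)

theorem sum_range_sub_one_div_pow {F : Type*} [Field F] {x : F} (hx : x ≠ 0) (n : ℕ) :
    ∑ i ∈ range n, (x - 1) / x ^ (n - i) = 1 - (x ^ n)⁻¹ := by
  induction n with
  | zero => simp
  | succ n ih =>
    rw [sum_range_succ', Nat.sub_zero]
    simp only [Nat.add_sub_add_right, ih]
    field_simp
    ring

theorem xiSummand_prime_pow {p : ℕ} (hp : p.Prime) (t : ℕ) {i K : ℕ} (hi : i ≤ K) :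
    xiSummand t (p ^ K) (p ^ i) =
      (if K - i = 0 then 1 else -(p : ℚ) / (p : ℚ) ^ (K - i)) *
        (if K - i ≠ 0 ∧ (p ∣ t ∨ i ≠ 0) then 1 - (p : ℚ)⁻¹ else 1) *
        (if i ≠ 0 ∧ p ∣ t then 1 - (p : ℚ)⁻¹ else 1) := by
  have hdvd : p ∣ t * p ^ i ↔ p ∣ t ∨ i ≠ 0 := by simp [hp.prime.dvd_mul, hp.ne_one]
  have hlambda : lambdaFun (p ^ (K - i)) / ((p ^ (K - i) : ℕ) : ℚ) =
      if K - i = 0 then 1 else -(p : ℚ) / (p : ℚ) ^ (K - i) := by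
    rw [lambdaFun_prime_pow hp]
    split_ifs <;> simp_all
  simp only [xiSummand, Nat.pow_div hi hp.pos, totientRatio_gcd_prime_pow hp, hdvd, hlambda]

theorem xiSum_prime_pow {p : ℕ} (hp : p.Prime) (t K : ℕ) :
    xiSum t (p ^ K) = if K = 0 then 1 else 0 := by
  rw [xiSum_apply, Nat.sum_divisors_prime_pow hp]
  cases K with
  | zero => simp [xiSummand, lambdaFun, totientRatio]
  | succ K =>
    have hp₀ : (p : ℚ) ≠ 0 := by exact_mod_cast hp.ne_zero
    set W : ℚ := if p ∣ t then 1 - (p : ℚ)⁻¹ else 1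
    have h_last : xiSummand t (p ^ (K + 1)) (p ^ (K + 1)) = W := by
      simp [xiSummand_prime_pow hp t le_rfl, W]
    have h_first : xiSummand t (p ^ (K + 1)) (p ^ 0) = -W / (p : ℚ) ^ K := by
      rw [xiSummand_prime_pow hp t (Nat.zero_le _)]
      simp only [W, Nat.sub_zero, K.add_one_ne_zero, not_false_eq_true, true_and, ne_eq,
        not_true_eq_false, false_and, or_false, if_false, mul_one]
      split_ifs <;> field_simp <;> ring
    have h_mid : ∀ i ∈ range K, xiSummand t (p ^ (K + 1)) (p ^ (i + 1)) =
        -W * (((p : ℚ) - 1) / (p : ℚ) ^ (K - i)) := by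
      intro i hi
      have hiK : i < K := mem_range.mp hi
      rw [xiSummand_prime_pow hp t (by omega)]
      have hKi : K - i ≠ 0 := by omega
      simp only [W, Nat.add_sub_add_right, hKi, i.add_one_ne_zero, if_false, ne_eq,
        not_false_eq_true, or_true, and_true, true_and]
      split_ifs <;> field_simp
    rw [sum_range_succ, sum_range_succ', sum_congr rfl h_mid, ← mul_sum,
      sum_range_sub_one_div_pow hp₀, h_first, h_last, if_neg K.add_one_ne_zero]
    field_simp
    ring

theorem xiSum_eq_one (t : ℕ) : xiSum t = 1 := by
  refine (IsMultiplicative.eq_iff_eq_on_prime_powers _ (isMultiplicative_xiSum t) 1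
    isMultiplicative_one).mpr fun p K hp => ?_
  simp [xiSum_prime_pow hp, one_apply, hp.ne_one]

/-- For every positive integer `n` and every divisor `t` of `n`,
`Σ_{m | n, t | m} ξ_n(m) · φ(gcd(t, m/t))/gcd(t, m/t)` equals `1` if `t = n` and `0` otherwise. -/
theorem sum_xi_eq (n t : ℕ) (hn : 0 < n) (ht : t ∣ n) :
    (∑ m ∈ n.divisors.filter (fun m => t ∣ m),
        xiFun n m * ((Nat.totient (Nat.gcd t (m / t)) : ℚ) / (Nat.gcd t (m / t) : ℚ))) =
      if t = n then 1 else 0 := by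
  obtain ⟨e, rfl⟩ := ht
  have ht₀ : 0 < t := Nat.pos_of_mul_pos_right hn
  calc _ = ∑ d ∈ e.divisors, xiSummand t e d := by
        rw [Nat.sum_divisors_filter_dvd _ (dvd_mul_right t e), Nat.mul_div_cancel_left e ht₀]
        refine sum_congr rfl fun d _ => ?_
        rw [xiFun, xiSummand, totientRatio, totientRatio, Nat.mul_div_cancel_left d ht₀,
          Nat.mul_div_mul_left e d ht₀]
    _ = xiSum t e := rfl
    _ = if t = t * e then 1 else 0 := by
        rw [xiSum_eq_one, one_apply]
        simp [eq_comm (a := t), Nat.mul_eq_left ht₀.ne']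
end

section
/- For a positive integer n, the sum over divisors c of n of the cusp widths n/gcd(c², n) times the number φ(gcd(c, n/c)) of cusps with that denominator equals ψ(n), that is, Σ_{c | n} φ(gcd(c, n/c)) · n/gcd(c², n) = ψ(n), where ψ(n) = n·∏_{p|n}(1+1/p). -/
open Finset

/-- The Dedekind psi function `ψ(n) = n·∏_{p | n} (1 + 1/p)` as a rational number. -/
noncomputable def dedekindPsi (n : ℕ) : ℚ := (n : ℚ) * ∏ p ∈ n.primeFactors, (1 + 1 / (p : ℚ))

/-- Auxiliary normalized form of the cusp-width sum. -/
noncomputable def cuspSum (n : ℕ) : ℚ :=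
  ∑ c ∈ n.divisors,
    (Nat.totient (Nat.gcd c (n / c)) : ℚ) * (((n / c : ℕ) : ℚ) / ((Nat.gcd c (n / c) : ℕ) : ℚ))

lemma cuspSum_one : cuspSum 1 = 1 := by
  simp [cuspSum]

lemma cuspSum_zero : cuspSum 0 = 0 := by
  simp [cuspSum]

lemma cuspSum_mul_of_coprime : ∀ x y : ℕ, Nat.Coprime x y →
    cuspSum (x * y) = cuspSum x * cuspSum y := by
  intro m n h
  rcases eq_or_ne m 0 with rfl | hm
  · have : n = 1 := by simpa [Nat.coprime_zero_left] using h
    subst this; simp [cuspSum_zero, cuspSum_one]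
  rcases eq_or_ne n 0 with rfl | hn
  · have : m = 1 := by simpa [Nat.coprime_zero_right] using h
    subst this; simp [cuspSum_zero, cuspSum_one]
  unfold cuspSum
  rw [sum_mul_sum, ← Finset.sum_product']
  refine Finset.sum_nbij' (i := fun c => (Nat.gcd c m, Nat.gcd c n))
    (j := fun p => p.1 * p.2) ?_ ?_ ?_ ?_ ?_
  · rintro c hc
    rw [Nat.mem_divisors] at hc
    simp only [Finset.mem_product, Nat.mem_divisors]
    exact ⟨⟨Nat.gcd_dvd_right _ _, hm⟩, ⟨Nat.gcd_dvd_right _ _, hn⟩⟩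
  · rintro ⟨c₁, c₂⟩ hc
    simp only [Finset.mem_product, Nat.mem_divisors] at hc
    rw [Nat.mem_divisors]
    exact ⟨mul_dvd_mul hc.1.1 hc.2.1, mul_ne_zero hm hn⟩
  · rintro c hc
    rw [Nat.mem_divisors] at hc
    exact (Nat.gcd_mul_gcd_eq_iff_dvd_mul_of_coprime h).mpr hc.1
  · rintro ⟨c₁, c₂⟩ hc
    simp only [Finset.mem_product, Nat.mem_divisors] at hc
    obtain ⟨⟨hc₁, -⟩, ⟨hc₂, -⟩⟩ := hc
    have h21 : Nat.Coprime c₂ (m / c₁) :=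
      ((Nat.Coprime.coprime_dvd_left (Nat.div_dvd_of_dvd hc₁) h).coprime_dvd_right hc₂).symm
    have h12 : Nat.Coprime c₁ (n / c₂) :=
      Nat.Coprime.coprime_dvd_right (Nat.div_dvd_of_dvd hc₂) (Nat.Coprime.coprime_dvd_left hc₁ h)
    have e1 : (c₁ * c₂).gcd m = c₁ := by
      conv_lhs => rw [← Nat.mul_div_cancel' hc₁]
      rw [Nat.gcd_mul_left, h21.gcd_eq_one, mul_one]
    have e2 : (c₁ * c₂).gcd n = c₂ := by
      conv_lhs => rw [mul_comm c₁ c₂, ← Nat.mul_div_cancel' hc₂]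
      rw [Nat.gcd_mul_left, h12.gcd_eq_one, mul_one]
    simp [e1, e2]
  · rintro c hc
    rw [Nat.mem_divisors] at hc
    obtain ⟨hcd, -⟩ := hc
    set c₁ := Nat.gcd c m with hc₁def
    set c₂ := Nat.gcd c n with hc₂def
    have hc₁ : c₁ ∣ m := Nat.gcd_dvd_right _ _
    have hc₂ : c₂ ∣ n := Nat.gcd_dvd_right _ _
    have hcc : c₁ * c₂ = c := (Nat.gcd_mul_gcd_eq_iff_dvd_mul_of_coprime h).mpr hcd
    set d₁ := m / c₁ with hd₁def
    set d₂ := n / c₂ with hd₂def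
    have hd₁ : d₁ ∣ m := Nat.div_dvd_of_dvd hc₁
    have hd₂ : d₂ ∣ n := Nat.div_dvd_of_dvd hc₂
    have hdiv : m * n / c = d₁ * d₂ := by
      rw [← hcc, ← Nat.div_mul_div_comm hc₁ hc₂]
    have hcop12 : Nat.Coprime c₁ d₂ :=
      Nat.Coprime.coprime_dvd_right hd₂ (Nat.Coprime.coprime_dvd_left hc₁ h)
    have hcop21 : Nat.Coprime c₂ d₁ :=
      ((Nat.Coprime.coprime_dvd_left hd₁ h).coprime_dvd_right hc₂).symm
    have hcopd : Nat.Coprime d₁ d₂ :=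
      Nat.Coprime.coprime_dvd_right hd₂ (Nat.Coprime.coprime_dvd_left hd₁ h)
    have hg : Nat.gcd c (d₁ * d₂) = Nat.gcd c₁ d₁ * Nat.gcd c₂ d₂ := by
      rw [← hcc, Nat.Coprime.gcd_mul _ hcopd,
        Nat.Coprime.gcd_mul_right_cancel c₁ hcop21,
        Nat.Coprime.gcd_mul_left_cancel c₂ hcop12]
    have hgcop : Nat.Coprime (Nat.gcd c₁ d₁) (Nat.gcd c₂ d₂) :=
      Nat.Coprime.coprime_dvd_right ((Nat.gcd_dvd_left _ _).trans hc₂)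
        (Nat.Coprime.coprime_dvd_left ((Nat.gcd_dvd_left _ _).trans hc₁) h)
    simp only [← hc₁def, ← hc₂def]
    rw [hdiv, hg, Nat.totient_mul hgcop]
    push_cast
    ring

lemma totient_prime_pow_cast {p : ℕ} (hp : p.Prime) {s : ℕ} (hs : 0 < s) :
    ((Nat.totient (p ^ s) : ℕ) : ℚ) = (p : ℚ) ^ s - (p : ℚ) ^ (s - 1) := by
  rw [Nat.totient_prime_pow hp hs]
  have h1 : (1 : ℕ) ≤ p := hp.one_lt.le
  push_cast [Nat.cast_sub h1]
  have hq : (p : ℚ) ≠ 0 := by exact_mod_cast hp.pos.ne'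
  have : s - 1 + 1 = s := by omega
  calc (p : ℚ) ^ (s - 1) * ((p : ℚ) - 1)
      = (p : ℚ) ^ (s - 1) * (p : ℚ) - (p : ℚ) ^ (s - 1) := by ring
    _ = (p : ℚ) ^ s - (p : ℚ) ^ (s - 1) := by rw [← pow_succ, this]

lemma term_aux {p : ℕ} (hp : p.Prime) {s e : ℕ} (hs : 1 ≤ s) (hse : s ≤ e) :
    (Nat.totient (p ^ s) : ℚ) * ((p : ℚ) ^ e / (p : ℚ) ^ s) =
      (p : ℚ) ^ e - (p : ℚ) ^ (e - 1) := by
  have hq : (p : ℚ) ≠ 0 := by exact_mod_cast hp.pos.ne'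
  rw [totient_prime_pow_cast hp hs]
  have h1 : s - 1 + 1 = s := by omega
  have h2 : e - 1 + 1 = e := by omega
  have hs' : (p : ℚ) ^ s = (p : ℚ) ^ (s - 1) * p := by rw [← pow_succ, h1]
  have he' : (p : ℚ) ^ e = (p : ℚ) ^ (e - 1) * p := by rw [← pow_succ, h2]
  rw [hs', he']
  have ha : (p : ℚ) ^ (s - 1) ≠ 0 := pow_ne_zero _ hq
  field_simp

lemma cuspSum_prime_pow {p : ℕ} (hp : p.Prime) {k : ℕ} (hk : k ≠ 0) :
    cuspSum (p ^ k) = (p : ℚ) ^ k + (p : ℚ) ^ k / (p : ℚ) := by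
  have hq : (p : ℚ) ≠ 0 := by exact_mod_cast hp.pos.ne'
  obtain ⟨m, rfl⟩ : ∃ m, k = m + 1 := ⟨k - 1, by omega⟩
  set k := m + 1 with hkdef
  unfold cuspSum
  rw [Nat.sum_divisors_prime_pow hp]
  have hterm : ∀ x, x ≤ k →
      (Nat.totient (Nat.gcd (p ^ x) (p ^ k / p ^ x)) : ℚ) *
        (((p ^ k / p ^ x : ℕ) : ℚ) / ((Nat.gcd (p ^ x) (p ^ k / p ^ x) : ℕ) : ℚ)) =
      (Nat.totient (p ^ min x (k - x)) : ℚ) *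
        ((p : ℚ) ^ (k - x) / (p : ℚ) ^ min x (k - x)) := by
    intro x hx
    have hdiv : p ^ k / p ^ x = p ^ (k - x) := Nat.pow_div hx hp.pos
    have hgcd : Nat.gcd (p ^ x) (p ^ (k - x)) = p ^ min x (k - x) := by
      rcases le_total x (k - x) with hle | hle
      · rw [min_eq_left hle, Nat.gcd_eq_left (pow_dvd_pow p hle)]
      · rw [min_eq_right hle, Nat.gcd_eq_right (pow_dvd_pow p hle)]
    rw [hdiv, hgcd]
    push_cast
    ring
  rw [Finset.sum_congr rfl (fun x hx => hterm x (by
    rw [Finset.mem_range] at hx; omega))]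
  rw [Finset.sum_range_succ, Finset.sum_range_succ']
  have hlast : (Nat.totient (p ^ min k (k - k)) : ℚ) *
      ((p : ℚ) ^ (k - k) / (p : ℚ) ^ min k (k - k)) = 1 := by
    simp
  have hfirst : (Nat.totient (p ^ min 0 (k - 0)) : ℚ) *
      ((p : ℚ) ^ (k - 0) / (p : ℚ) ^ min 0 (k - 0)) = (p : ℚ) ^ k := by
    simp
  rw [hlast, hfirst]
  have hmid : ∀ i ∈ Finset.range m,
      (Nat.totient (p ^ min (i + 1) (k - (i + 1))) : ℚ) *
        ((p : ℚ) ^ (k - (i + 1)) / (p : ℚ) ^ min (i + 1) (k - (i + 1))) =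
      (fun j => (p : ℚ) ^ (j + 1) - (p : ℚ) ^ j) (m - 1 - i) := by
    intro i hi
    rw [Finset.mem_range] at hi
    have he : k - (i + 1) = m - i := by omega
    have h1 : m - 1 - i + 1 = m - i := by omega
    dsimp only
    rw [he, h1]
    have hs1 : 1 ≤ min (i + 1) (m - i) := by
      have : 1 ≤ m - i := by omega
      omega
    have hse : min (i + 1) (m - i) ≤ m - i := min_le_right _ _
    have h2 : m - i - 1 = m - 1 - i := by omega
    rw [term_aux hp hs1 hse, h2]
  rw [Finset.sum_congr rfl hmid, Finset.sum_range_reflect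
    (fun j => (p : ℚ) ^ (j + 1) - (p : ℚ) ^ j) m,
    Finset.sum_range_sub (fun j => (p : ℚ) ^ j) m]
  have : (p : ℚ) ^ k / (p : ℚ) = (p : ℚ) ^ m := by
    rw [hkdef, pow_succ, mul_div_assoc, div_self hq, mul_one]
  rw [this]
  ring

/-- The sum over the cusps of `Γ₀(n)` of their widths equals `ψ(n)`: for each divisor `c` of
`n` there are `φ(gcd(c, n/c))` cusps `a/c`, each of width `n/gcd(c², n)`, so
`Σ_{c | n} φ(gcd(c, n/c)) · n/gcd(c², n) = ψ(n)`. -/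
theorem sum_cusp_widths_eq_psi (n : ℕ) (hn : 0 < n) :
    (∑ c ∈ n.divisors,
        (Nat.totient (Nat.gcd c (n / c)) : ℚ) * ((n : ℚ) / (Nat.gcd (c ^ 2) n : ℚ))) =
      dedekindPsi n := by
  have hn' : n ≠ 0 := hn.ne'
  have step1 : (∑ c ∈ n.divisors,
      (Nat.totient (Nat.gcd c (n / c)) : ℚ) * ((n : ℚ) / (Nat.gcd (c ^ 2) n : ℚ))) =
      cuspSum n := by
    unfold cuspSum
    refine Finset.sum_congr rfl fun c hc => ?_
    rw [Nat.mem_divisors] at hc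
    obtain ⟨hcd, -⟩ := hc
    have hc0 : c ≠ 0 := by rintro rfl; exact hn' (Nat.eq_zero_of_zero_dvd hcd)
    have hgcd : Nat.gcd (c ^ 2) n = c * Nat.gcd c (n / c) := by
      conv_lhs => rw [sq, ← Nat.mul_div_cancel' hcd]
      rw [Nat.gcd_mul_left]
    have hnc : (n : ℚ) = (c : ℚ) * ((n / c : ℕ) : ℚ) := by
      rw [← Nat.cast_mul, Nat.mul_div_cancel' hcd]
    rw [hgcd, hnc]
    push_cast
    rw [mul_div_mul_left _ _ (by exact_mod_cast hc0)]
  rw [step1]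
  rw [Nat.multiplicative_factorization cuspSum cuspSum_mul_of_coprime cuspSum_one hn']
  rw [Finsupp.prod]
  rw [Nat.support_factorization]
  have hprod : ∏ p ∈ n.primeFactors, cuspSum (p ^ n.factorization p) =
      ∏ p ∈ n.primeFactors, ((p : ℚ) ^ n.factorization p * (1 + 1 / (p : ℚ))) := by
    refine Finset.prod_congr rfl fun p hp => ?_
    have hpp : p.Prime := Nat.prime_of_mem_primeFactors hp
    have hk : n.factorization p ≠ 0 :=
      (Nat.Prime.factorization_pos_of_dvd hpp hn' (Nat.dvd_of_mem_primeFactors hp)).ne'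
    rw [cuspSum_prime_pow hpp hk]
    ring
  rw [hprod, Finset.prod_mul_distrib]
  unfold dedekindPsi
  congr 1
  have : (n : ℚ) = ((n.factorization.prod fun p k => p ^ k : ℕ) : ℚ) := by
    rw [Nat.factorization_prod_pow_eq_self hn']
  rw [this, Finsupp.prod, Nat.support_factorization]
  push_cast
  rfl
end
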